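/- Let K be a commutative ring, X and Y commutative monoids, and α : X → Y a monoid homomorphism. The functor α_* on graded K-modules, (α_* M)_y = ⊕_{α(x)=y} M_x, is symmetric monoidal with respect to the graded tensor products: there is a natural isomorphism α_*(M ⊗ N) ≅ α_* M ⊗ α_* N compatible with units and symmetries. -/

import Mathlib

open scoped DirectSum TensorProduct Classical

variable (K : Type) [CommRing K]

section Defs

variable {X Y : Type} [AddCommMonoid X] [AddCommMonoid Y]

/-- Pushforward of an `X`-graded `K`-module along `α : X → Y`:
`(α_* M)_y = ⊕_{α(x) = y} M_x`. -/
abbrev Push (α : X →+ Y) (M : X → Type) [∀ x, AddCommGroup (M x)] [∀ x, Module K (M x)]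
    (y : Y) : Type :=
  ⨁ x : {x : X // α x = y}, M x.1

/-- Pushforward of a degreewise linear map. -/
noncomputable def pushMap (α : X →+ Y) {M N : X → Type}
    [∀ x, AddCommGroup (M x)] [∀ x, Module K (M x)]
    [∀ x, AddCommGroup (N x)] [∀ x, Module K (N x)]
    (f : ∀ x, M x →ₗ[K] N x) (y : Y) : Push K α M y →ₗ[K] Push K α N y :=
  DirectSum.toModule K _ _ fun x =>
    (DirectSum.lof K {x : X // α x = y} (fun x => N x.1) x).comp (f x.1)

/-- The graded tensor product of `X`-graded `K`-modules:
`(M ⊗ N)_z = ⊕_{x + y = z} M_x ⊗[K] N_y`. -/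
abbrev GT (M N : X → Type) [∀ x, AddCommGroup (M x)] [∀ x, Module K (M x)]
    [∀ x, AddCommGroup (N x)] [∀ x, Module K (N x)] (z : X) : Type :=
  ⨁ p : {p : X × X // p.1 + p.2 = z}, (M p.1.1 ⊗[K] N p.1.2)

/-- Degreewise functoriality of the graded tensor product. -/
noncomputable def gtMap {M M' N N' : X → Type}
    [∀ x, AddCommGroup (M x)] [∀ x, Module K (M x)]
    [∀ x, AddCommGroup (M' x)] [∀ x, Module K (M' x)]
    [∀ x, AddCommGroup (N x)] [∀ x, Module K (N x)]
    [∀ x, AddCommGroup (N' x)] [∀ x, Module K (N' x)]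
    (f : ∀ x, M x →ₗ[K] M' x) (g : ∀ x, N x →ₗ[K] N' x) (z : X) :
    GT K M N z →ₗ[K] GT K M' N' z :=
  DirectSum.toModule K _ _ fun p =>
    (DirectSum.lof K {p : X × X // p.1 + p.2 = z} (fun p => M' p.1.1 ⊗[K] N' p.1.2) p).comp
      (TensorProduct.map (f p.1.1) (g p.1.2))

/-- The symmetry (braiding) of the graded tensor product, `a ⊗ b ↦ b ⊗ a`. -/
noncomputable def gtBraid (M N : X → Type)
    [∀ x, AddCommGroup (M x)] [∀ x, Module K (M x)]
    [∀ x, AddCommGroup (N x)] [∀ x, Module K (N x)] (z : X) :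
    GT K M N z →ₗ[K] GT K N M z :=
  DirectSum.toModule K _ _ fun p =>
    (DirectSum.lof K {p : X × X // p.1 + p.2 = z} (fun p => N p.1.1 ⊗[K] M p.1.2)
        ⟨(p.1.2, p.1.1), by rw [add_comm]; exact p.2⟩).comp
      (TensorProduct.comm K (M p.1.1) (N p.1.2)).toLinearMap

/-- The unit of the graded tensor product: `K` in degree `0` and `0` elsewhere. -/
noncomputable def gunit (X : Type) [AddCommMonoid X] (x : X) : Type :=
  ↥(if x = 0 then (⊤ : Submodule K K) else ⊥)

noncomputable instance (X : Type) [AddCommMonoid X] (x : X) :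
    AddCommGroup (gunit K X x) := by unfold gunit; infer_instance

noncomputable instance (X : Type) [AddCommMonoid X] (x : X) :
    Module K (gunit K X x) := by unfold gunit; infer_instance

end Defs

/-!
The monoidal structure map sends `m ⊗ n` in degree `(a, b)` of `α_*(M ⊗ N)` to `m ⊗ n` in degree
`(α a, α b)` of `α_* M ⊗ α_* N`. It is an isomorphism because both sides are direct sums of the
same modules `M a ⊗ N b`: regrouping `⊕_{α (a + b) = y}` as `⊕_{u + v = y} ⊕_{α a = u, α b = v}`
uses only `α (a + b) = α a + α b`, and tensor products commute with direct sums. For the units, the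
only summand of `(α_* 1)_y` that is not zero is the one indexed by `x = 0`, which occurs exactly
when `y = 0`.
-/

open DirectSum TensorProduct

noncomputable def DirectSum.componentEquivOfSubsingleton {R ι : Type*} [Semiring R]
    {A : ι → Type*} [∀ i, AddCommMonoid (A i)] [∀ i, Module R (A i)] (i₀ : ι)
    (h : ∀ i ≠ i₀, Subsingleton (A i)) : (⨁ i, A i) ≃ₗ[R] A i₀ :=
  LinearEquiv.ofLinearMap (component R ι A i₀) (lof R ι A i₀)
    (by ext a; exact component.lof_self R i₀ a)
    (by
      ext i a
      by_cases hi : i = i₀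
      · subst hi
        simp only [LinearMap.comp_apply, component.lof_self, LinearMap.id_apply]
      · have := h i hi
        simp only [Subsingleton.elim a 0, map_zero])

section Pushforward

variable {X Y : Type} [AddCommMonoid X] [AddCommMonoid Y] (α : X →+ Y)

@[simp]
theorem pushMap_lof {M N : X → Type} [∀ x, AddCommGroup (M x)] [∀ x, Module K (M x)]
    [∀ x, AddCommGroup (N x)] [∀ x, Module K (N x)] (f : ∀ x, M x →ₗ[K] N x) {y : Y}
    (x : {x : X // α x = y}) (m : M x.1) :
    pushMap K α f y (lof K _ _ x m) = lof K _ (fun x => N x.1) x (f x.1 m) :=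
  toModule_lof K _ _

@[simp]
theorem gtMap_lof_tmul {M M' N N' : X → Type}
    [∀ x, AddCommGroup (M x)] [∀ x, Module K (M x)]
    [∀ x, AddCommGroup (M' x)] [∀ x, Module K (M' x)]
    [∀ x, AddCommGroup (N x)] [∀ x, Module K (N x)]
    [∀ x, AddCommGroup (N' x)] [∀ x, Module K (N' x)]
    (f : ∀ x, M x →ₗ[K] M' x) (g : ∀ x, N x →ₗ[K] N' x) {z : X}
    (p : {p : X × X // p.1 + p.2 = z}) (m : M p.1.1) (n : N p.1.2) :
    gtMap K f g z (lof K _ _ p (m ⊗ₜ n))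
      = lof K _ (fun p => M' p.1.1 ⊗[K] N' p.1.2) p (f _ m ⊗ₜ g _ n) := by
  simp only [gtMap, toModule_lof, LinearMap.comp_apply, map_tmul]

@[simp]
theorem gtBraid_lof_tmul {M N : X → Type} [∀ x, AddCommGroup (M x)] [∀ x, Module K (M x)]
    [∀ x, AddCommGroup (N x)] [∀ x, Module K (N x)] {z : X}
    (p : {p : X × X // p.1 + p.2 = z}) (m : M p.1.1) (n : N p.1.2) :
    gtBraid K M N z (lof K _ _ p (m ⊗ₜ n))
      = lof K {p : X × X // p.1 + p.2 = z} (fun p => N p.1.1 ⊗[K] M p.1.2)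
          ⟨(p.1.2, p.1.1), by rw [add_comm]; exact p.2⟩ (n ⊗ₜ m) := by
  simp only [gtBraid, toModule_lof, LinearMap.comp_apply, LinearEquiv.coe_coe, comm_tmul]

noncomputable def pushLof {M : X → Type} [∀ x, AddCommGroup (M x)] [∀ x, Module K (M x)] (x : X) :
    M x →ₗ[K] Push K α M (α x) :=
  lof K {x' : X // α x' = α x} (fun x' => M x'.1) ⟨x, rfl⟩

variable (M N : X → Type) [∀ x, AddCommGroup (M x)] [∀ x, Module K (M x)]
  [∀ x, AddCommGroup (N x)] [∀ x, Module K (N x)]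

variable {K α M N} in
theorem pushGT_hom_ext {P : Type*} [AddCommGroup P] [Module K P] {y : Y}
    {f g : Push K α (GT K M N) y →ₗ[K] P}
    (h : ∀ (a b : X) (hab : α (a + b) = y) (m : M a) (n : N b),
      f (lof K _ _ ⟨a + b, hab⟩ (lof K _ _ ⟨(a, b), rfl⟩ (m ⊗ₜ n)))
        = g (lof K _ _ ⟨a + b, hab⟩ (lof K _ _ ⟨(a, b), rfl⟩ (m ⊗ₜ n)))) :
    f = g := by
  refine linearMap_ext K fun ⟨z, hz⟩ => linearMap_ext K fun ⟨⟨a, b⟩, hab⟩ => ?_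
  dsimp only at hab
  subst hab
  exact TensorProduct.ext' (h a b hz)

variable {K α M N} in
theorem gtPush_hom_ext {P : Type*} [AddCommGroup P] [Module K P] {y : Y}
    {f g : GT K (Push K α M) (Push K α N) y →ₗ[K] P}
    (h : ∀ (a b : X) (hab : α a + α b = y) (m : M a) (n : N b),
      f (lof K _ _ ⟨(α a, α b), hab⟩ (pushLof K α a m ⊗ₜ pushLof K α b n))
        = g (lof K _ _ ⟨(α a, α b), hab⟩ (pushLof K α a m ⊗ₜ pushLof K α b n))) :
    f = g := by
  refine linearMap_ext K fun ⟨⟨u, v⟩, huv⟩ => TensorProduct.ext ?_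
  refine linearMap_ext K fun ⟨a, ha⟩ => LinearMap.ext fun m => ?_
  refine linearMap_ext K fun ⟨b, hb⟩ => LinearMap.ext fun n => ?_
  dsimp only at ha hb
  subst ha hb
  exact h a b huv m n

noncomputable def pushGTToGTPush (y : Y) :
    Push K α (GT K M N) y →ₗ[K] GT K (Push K α M) (Push K α N) y :=
  toModule K _ _ fun z => toModule K _ _ fun p =>
    (lof K {q : Y × Y // q.1 + q.2 = y} (fun q => Push K α M q.1.1 ⊗[K] Push K α N q.1.2)
        ⟨(α p.1.1, α p.1.2), by rw [← map_add, p.2, z.2]⟩).comp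
      (TensorProduct.map (pushLof K α p.1.1) (pushLof K α p.1.2))

noncomputable def gtPushToPushGT (y : Y) :
    GT K (Push K α M) (Push K α N) y →ₗ[K] Push K α (GT K M N) y :=
  toModule K _ _ fun q =>
    (toModule K _ _ fun ab : {x : X // α x = q.1.1} × {x : X // α x = q.1.2} =>
      (lof K {z : X // α z = y} (fun z => GT K M N z.1)
          ⟨ab.1.1 + ab.2.1, by rw [map_add, ab.1.2, ab.2.2, q.2]⟩).comp
        (lof K {p : X × X // p.1 + p.2 = ab.1.1 + ab.2.1} (fun p => M p.1.1 ⊗[K] N p.1.2)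
          ⟨(ab.1.1, ab.2.1), rfl⟩)).comp
      (TensorProduct.directSum K K (fun a : {x : X // α x = q.1.1} => M a.1)
        (fun b : {x : X // α x = q.1.2} => N b.1)).toLinearMap

@[simp]
theorem pushGTToGTPush_lof_lof_tmul {y : Y} (z : {z : X // α z = y})
    (p : {p : X × X // p.1 + p.2 = z.1}) (m : M p.1.1) (n : N p.1.2) :
    pushGTToGTPush K α M N y (lof K _ _ z (lof K _ _ p (m ⊗ₜ n)))
      = lof K _ (fun q : {q : Y × Y // q.1 + q.2 = y} => Push K α M q.1.1 ⊗[K] Push K α N q.1.2)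
          ⟨(α p.1.1, α p.1.2), by rw [← map_add, p.2, z.2]⟩
          (pushLof K α p.1.1 m ⊗ₜ pushLof K α p.1.2 n) := by
  simp only [pushGTToGTPush, toModule_lof, LinearMap.comp_apply, map_tmul]

@[simp]
theorem gtPushToPushGT_lof_tmul {y : Y} (a b : X) (hab : α a + α b = y) (m : M a) (n : N b) :
    gtPushToPushGT K α M N y
        (lof K _ _ ⟨(α a, α b), hab⟩ (pushLof K α a m ⊗ₜ pushLof K α b n))
      = lof K _ (fun z : {z : X // α z = y} => GT K M N z.1)
          ⟨a + b, by rw [map_add, hab]⟩ (lof K _ _ ⟨(a, b), rfl⟩ (m ⊗ₜ n)) := by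
  simp only [gtPushToPushGT, pushLof, toModule_lof, LinearMap.comp_apply, LinearEquiv.coe_coe,
    directSum_lof_tmul_lof]

noncomputable def pushGTEquiv (y : Y) :
    Push K α (GT K M N) y ≃ₗ[K] GT K (Push K α M) (Push K α N) y :=
  LinearEquiv.ofLinearMap (pushGTToGTPush K α M N y) (gtPushToPushGT K α M N y)
    (gtPush_hom_ext fun a b hab m n => by simp)
    (pushGT_hom_ext fun a b hab m n => by simp)

theorem gtMap_pushMap_comp_pushGTEquiv {M' N' : X → Type}
    [∀ x, AddCommGroup (M' x)] [∀ x, Module K (M' x)]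
    [∀ x, AddCommGroup (N' x)] [∀ x, Module K (N' x)]
    (f : ∀ x, M x →ₗ[K] M' x) (g : ∀ x, N x →ₗ[K] N' x) (y : Y) :
    (gtMap K (pushMap K α f) (pushMap K α g) y).comp (pushGTEquiv K α M N y).toLinearMap
      = (pushGTEquiv K α M' N' y).toLinearMap.comp (pushMap K α (fun z => gtMap K f g z) y) :=
  pushGT_hom_ext fun a b hab m n => by simp [pushGTEquiv, pushLof]

theorem gtBraid_comp_pushGTEquiv (y : Y) :
    (gtBraid K (Push K α M) (Push K α N) y).comp (pushGTEquiv K α M N y).toLinearMap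
      = (pushGTEquiv K α N M y).toLinearMap.comp (pushMap K α (fun z => gtBraid K M N z) y) :=
  pushGT_hom_ext fun a b hab m n => by simp [pushGTEquiv]

end Pushforward

section Unit

variable {X Y : Type} [AddCommMonoid X] [AddCommMonoid Y]

theorem subsingleton_gunit {x : X} (hx : x ≠ 0) : Subsingleton (gunit K X x) := by
  unfold gunit
  rw [if_neg hx]
  infer_instance

noncomputable def gunitEquivOfIff {x : X} {y : Y} (h : x = 0 ↔ y = 0) :
    gunit K X x ≃ₗ[K] gunit K Y y :=
  LinearEquiv.ofEq _ _ (by rw [if_congr h rfl rfl])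

theorem nonempty_push_gunit_equiv (α : X →+ Y) (y : Y) :
    Nonempty (Push K α (gunit K X) y ≃ₗ[K] gunit K Y y) := by
  by_cases hy : y = 0
  · subst hy
    refine ⟨(DirectSum.componentEquivOfSubsingleton ⟨0, map_zero α⟩ fun x hx => ?_).trans
      (gunitEquivOfIff K (iff_of_true rfl rfl))⟩
    exact subsingleton_gunit K fun h => hx (Subtype.ext h)
  · have : Subsingleton (gunit K Y y) := subsingleton_gunit K hy
    have : ∀ x : {x : X // α x = y}, Subsingleton (gunit K X x.1) := fun x =>
      subsingleton_gunit K fun h => hy (by rw [← x.2, h, map_zero])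
    exact ⟨LinearEquiv.ofSubsingleton _ _⟩

end Unit

/-- Let `α : X → Y` be a homomorphism of commutative monoids.  The pushforward functor
`α_*` on graded `K`-modules, `(α_* M)_y = ⊕_{α(x)=y} M_x`, is symmetric monoidal for the
graded tensor products: there are natural isomorphisms `α_*(M ⊗ N) ≅ α_* M ⊗ α_* N`
(natural in `M` and `N`) compatible with the units and the symmetries. -/
theorem pushforward_symmetric_monoidal {X Y : Type} [AddCommMonoid X] [AddCommMonoid Y]
    (α : X →+ Y) :
    ∃ e : ∀ (M N : X → Type) [∀ x, AddCommGroup (M x)] [∀ x, Module K (M x)]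
        [∀ x, AddCommGroup (N x)] [∀ x, Module K (N x)] (y : Y),
        Push K α (GT K M N) y ≃ₗ[K] GT K (Push K α M) (Push K α N) y,
      -- naturality in `M` and `N`
      (∀ (M M' N N' : X → Type)
        [∀ x, AddCommGroup (M x)] [∀ x, Module K (M x)]
        [∀ x, AddCommGroup (M' x)] [∀ x, Module K (M' x)]
        [∀ x, AddCommGroup (N x)] [∀ x, Module K (N x)]
        [∀ x, AddCommGroup (N' x)] [∀ x, Module K (N' x)]
        (f : ∀ x, M x →ₗ[K] M' x) (g : ∀ x, N x →ₗ[K] N' x) (y : Y),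
        (gtMap K (pushMap K α f) (pushMap K α g) y).comp (e M N y).toLinearMap
          = (e M' N' y).toLinearMap.comp (pushMap K α (fun z => gtMap K f g z) y)) ∧
      -- compatibility with the symmetries
      (∀ (M N : X → Type)
        [∀ x, AddCommGroup (M x)] [∀ x, Module K (M x)]
        [∀ x, AddCommGroup (N x)] [∀ x, Module K (N x)] (y : Y),
        (gtBraid K (Push K α M) (Push K α N) y).comp (e M N y).toLinearMap
          = (e N M y).toLinearMap.comp (pushMap K α (fun z => gtBraid K M N z) y)) ∧
      -- compatibility with the units
      (∀ y : Y, Nonempty (Push K α (gunit K X) y ≃ₗ[K] gunit K Y y)) :=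
  ⟨fun M N _ _ _ _ y => pushGTEquiv K α M N y,
    fun M _ N _ _ _ _ _ _ _ _ _ => gtMap_pushMap_comp_pushGTEquiv K α M N,
    fun M N _ _ _ _ => gtBraid_comp_pushGTEquiv K α M N,
    nonempty_push_gunit_equiv K α⟩
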